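/- arXiv:2403.07178 — 5 statements merged into one kernel-verified Lean document; each statement's English description precedes it below -/
import Mathlib

section
/- Let (X, 𝒜, μ) be a measure space, let (ε_n) be a sequence of positive real numbers with ε_n → 0, and let (u_n) be a sequence of measurable functions u_n : X → ℝ converging μ-almost everywhere to a function u : X → ℝ. If liminf_{n→∞} (1/ε_n) ∫_X W(u_n(x)) dμ(x) < ∞, then W(u(x)) = 0 for μ-almost every x; equivalently, u(x) ∈ {−1, 1} for μ-almost every x ∈ X. -/
open MeasureTheory Filter Topology ENNReal

/-!
By Fatou's lemma, `∫ liminf W(uₙ) ≤ liminf ∫ W(uₙ)`, and the right-hand side vanishes: were it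
positive, the energies `(1/εₙ) ∫ W(uₙ)` would tend to `∞` since `1/εₙ → ∞`. Hence
`liminf W(uₙ(x)) = 0` for a.e. `x`, and continuity of `W` turns this into `W(u(x)) = 0`.
-/

theorem ENNReal.tendsto_ofReal_one_div_nhds_top {ι : Type*} {l : Filter ι} {f : ι → ℝ}
    (hpos : ∀ᶠ i in l, 0 < f i) (h0 : Tendsto f l (𝓝 0)) :
    Tendsto (fun i => ENNReal.ofReal (1 / f i)) l (𝓝 ∞) := by
  simp only [one_div]
  exact ENNReal.tendsto_ofReal_atTop.comp
    (tendsto_nhdsWithin_of_tendsto_nhds_of_eventually_within _ h0 hpos).inv_tendsto_nhdsGT_zero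

theorem ENNReal.liminf_eq_zero_of_liminf_mul_lt_top {ι : Type*} {l : Filter ι} [l.NeBot]
    {a b : ι → ℝ≥0∞} (ha : Tendsto a l (𝓝 ∞)) (hab : liminf (fun i => a i * b i) l < ∞) :
    liminf b l = 0 := by
  by_contra hne
  obtain ⟨c, hc0, hc⟩ := exists_between (pos_iff_ne_zero.mpr hne)
  have hac : Tendsto (fun i => a i * c) l (𝓝 ∞) := by
    simpa [ENNReal.top_mul hc0.ne'] using ENNReal.Tendsto.mul_const ha (Or.inr hc.ne_top)
  have habtop : Tendsto (fun i => a i * b i) l (𝓝 ∞) :=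
    tendsto_nhds_top_mono hac <| (eventually_lt_of_lt_liminf hc).mono fun i hi =>
      mul_le_mul_right hi.le _
  exact hab.ne habtop.liminf_eq

theorem ae_liminf_eq_zero_of_liminf_lintegral_eq_zero {α : Type*} [MeasurableSpace α]
    {μ : Measure α} {f : ℕ → α → ℝ≥0∞} (hf : ∀ n, Measurable (f n))
    (h : liminf (fun n => ∫⁻ x, f n x ∂μ) atTop = 0) :
    ∀ᵐ x ∂μ, liminf (fun n => f n x) atTop = 0 := by
  have hfatou : ∫⁻ x, liminf (fun n => f n x) atTop ∂μ = 0 :=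
    nonpos_iff_eq_zero.mp (h ▸ lintegral_liminf_le hf)
  exact (lintegral_eq_zero_iff (Measurable.liminf hf)).mp hfatou

/-- If a sequence of Cahn–Hilliard potential energies `(1/εₙ) ∫ W(uₙ) dμ` has finite liminf
with `εₙ → 0`, and `uₙ → u` μ-a.e., then `W(u) = 0` a.e., i.e. `u ∈ {-1, 1}` a.e. -/
theorem stmt0 {X : Type*} [MeasurableSpace X] (μ : Measure X)
    (W : ℝ → ℝ) (hWcont : Continuous W) (hWnonneg : ∀ x, 0 ≤ W x)
    (hWzero : ∀ x, W x = 0 ↔ x = -1 ∨ x = 1)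
    (ε : ℕ → ℝ) (hεpos : ∀ n, 0 < ε n) (hε0 : Tendsto ε atTop (𝓝 0))
    (u : ℕ → X → ℝ) (hu : ∀ n, Measurable (u n))
    (ulim : X → ℝ)
    (hconv : ∀ᵐ x ∂μ, Tendsto (fun n => u n x) atTop (𝓝 (ulim x)))
    (hliminf : Filter.liminf
      (fun n => ENNReal.ofReal (1 / ε n) * ∫⁻ x, ENNReal.ofReal (W (u n x)) ∂μ)
      atTop < ⊤) :
    ∀ᵐ x ∂μ, W (ulim x) = 0 ∧ (ulim x = -1 ∨ ulim x = 1) := by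
  have hpotential : liminf (fun n => ∫⁻ x, ENNReal.ofReal (W (u n x)) ∂μ) atTop = 0 :=
    ENNReal.liminf_eq_zero_of_liminf_mul_lt_top
      (ENNReal.tendsto_ofReal_one_div_nhds_top (.of_forall hεpos) hε0) hliminf
  have hpointwise : ∀ᵐ x ∂μ, liminf (fun n => ENNReal.ofReal (W (u n x))) atTop = 0 :=
    ae_liminf_eq_zero_of_liminf_lintegral_eq_zero
      (fun n => ENNReal.measurable_ofReal.comp (hWcont.measurable.comp (hu n))) hpotential
  filter_upwards [hconv, hpointwise] with x hx hx0
  have hlim : Tendsto (fun n => ENNReal.ofReal (W (u n x))) atTop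
      (𝓝 (ENNReal.ofReal (W (ulim x)))) :=
    (ENNReal.continuous_ofReal.comp hWcont).continuousAt.tendsto.comp hx
  have hW : W (ulim x) = 0 :=
    le_antisymm (ENNReal.ofReal_eq_zero.mp (hlim.liminf_eq ▸ hx0)) (hWnonneg _)
  exact ⟨hW, (hWzero _).mp hW⟩
end

section
/- Let X be a nonempty metric space and suppose (F_k) Γ-converges to F, where F_k, F : X → [0,∞]. Assume the family (F_k) is equicoercive: there exists a compact set K ⊆ X such that inf_{v ∈ X} F_k(v) = inf_{v ∈ K} F_k(v) for every k. Then F attains its infimum, i.e. there exists u ∈ X with F(u) = inf_{v ∈ X} F(v), and the sequence (inf_{v ∈ X} F_k(v))_k converges in [0,∞] to inf_{v ∈ X} F(v). -/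
/-!
Recovery sequences give `limsup_k inf F_k ≤ inf F`. Conversely, choose almost-minimizers `v_k`
of `F_k` in the compact set `K` and a subsequence along which `inf F_k` tends to its liminf and
`v_k` converges to some `u`; the liminf inequality along that subsequence gives
`F u ≤ liminf_k inf F_k`. Hence `inf F ≤ F u ≤ liminf ≤ limsup ≤ inf F`.
-/

open Filter Topology

/-- `(Fₖ)` Γ-converges to `F` on a metric space `X` (functionals valued in `[0,∞]`):
(i) liminf inequality along every convergent sequence, and
(ii) existence of recovery sequences. -/
def GammaConvergesTo {X : Type*} [MetricSpace X]
    (F : ℕ → X → ENNReal) (Flim : X → ENNReal) : Prop :=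
  (∀ u : X, ∀ uk : ℕ → X, Tendsto uk atTop (𝓝 u) →
      Flim u ≤ liminf (fun k => F k (uk k)) atTop) ∧
  (∀ u : X, ∃ uk : ℕ → X, Tendsto uk atTop (𝓝 u) ∧
      Tendsto (fun k => F k (uk k)) atTop (𝓝 (Flim u)))

open scoped ENNReal

theorem exists_strictMono_tendsto_liminf {α : Type*} [CompleteLinearOrder α] [TopologicalSpace α]
    [FirstCountableTopology α] [OrderTopology α] (u : ℕ → α) :
    ∃ σ : ℕ → ℕ, StrictMono σ ∧ Tendsto (u ∘ σ) atTop (𝓝 (liminf u atTop)) := by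
  obtain ⟨σ, huσ, hσ⟩ := exists_seq_tendsto_liminf (u := u) (f := atTop)
  obtain ⟨φ, hφ, hσφ⟩ := strictMono_subseq_of_tendsto_atTop hσ
  exact ⟨σ ∘ φ, hσφ, huσ.comp hφ.tendsto_atTop⟩

theorem ENNReal.exists_mem_le_biInf_add {α : Type*} {K : Set α} (hK : K.Nonempty)
    (f : α → ℝ≥0∞) {ε : ℝ≥0∞} (hε : ε ≠ 0) : ∃ x ∈ K, f x ≤ (⨅ y ∈ K, f y) + ε := by
  by_cases htop : (⨅ y ∈ K, f y) = ⊤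
  · obtain ⟨x, hx⟩ := hK
    exact ⟨x, hx, by simp [htop]⟩
  · obtain ⟨x, hx⟩ := iInf_lt_iff.1 (ENNReal.lt_add_right htop hε)
    obtain ⟨hxK, hlt⟩ := iInf_lt_iff.1 hx
    exact ⟨x, hxK, hlt.le⟩

namespace GammaConvergesTo

variable {X : Type*} [MetricSpace X] {F : ℕ → X → ℝ≥0∞} {Flim : X → ℝ≥0∞}

theorem le_liminf_comp (hΓ : GammaConvergesTo F Flim) {τ : ℕ → ℕ} (hτ : StrictMono τ)
    {v : ℕ → X} {u : X} (hv : Tendsto v atTop (𝓝 u)) :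
    Flim u ≤ liminf (fun j => F (τ j) (v j)) atTop := by
  -- the liminf inequality only sees full sequences, so fill the gaps of `τ` with `u`
  set w : ℕ → X := Function.extend τ v fun _ => u
  have hwτ : ∀ j, w (τ j) = v j := hτ.injective.extend_apply v _
  have hw : Tendsto w atTop (𝓝 u) := by
    rw [tendsto_def]
    intro U hU
    obtain ⟨J, hJ⟩ := eventually_atTop.1 (hv hU)
    filter_upwards [eventually_ge_atTop (τ J)] with n hn
    by_cases hn' : ∃ j, τ j = n
    · obtain ⟨j, rfl⟩ := hn'
      rw [Set.mem_preimage, hwτ]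
      exact hJ j (hτ.le_iff_le.1 hn)
    · rw [Set.mem_preimage, show w n = u from Function.extend_apply' _ _ _ hn']
      exact mem_of_mem_nhds hU
  calc Flim u ≤ liminf (fun n => F n (w n)) atTop := hΓ.1 u w hw
    _ ≤ liminf ((fun n => F n (w n)) ∘ τ) atTop := hτ.tendsto_atTop.liminf_le_liminf_comp
    _ = liminf (fun j => F (τ j) (v j)) atTop := by simp only [Function.comp_def, hwτ]

theorem limsup_iInf_le (hΓ : GammaConvergesTo F Flim) :
    limsup (fun k => ⨅ v, F k v) atTop ≤ ⨅ v, Flim v := by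
  refine le_iInf fun u => ?_
  obtain ⟨uk, -, hFuk⟩ := hΓ.2 u
  calc limsup (fun k => ⨅ v, F k v) atTop ≤ limsup (fun k => F k (uk k)) atTop :=
        limsup_le_limsup (Eventually.of_forall fun k => iInf_le _ _)
    _ = Flim u := hFuk.limsup_eq

theorem exists_le_liminf_iInf [Nonempty X] (hΓ : GammaConvergesTo F Flim) {K : Set X}
    (hK : IsCompact K) (hKF : ∀ k, ⨅ v, F k v = ⨅ v ∈ K, F k v) :
    ∃ u, Flim u ≤ liminf (fun k => ⨅ v, F k v) atTop := by
  set m : ℕ → ℝ≥0∞ := fun k => ⨅ v, F k v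
  rcases K.eq_empty_or_nonempty with rfl | hKne
  · have hm : m = fun _ => ⊤ := funext fun k => iInf_eq_top.2 (by simpa using hKF k)
    exact ⟨Classical.arbitrary X, by simp [hm]⟩
  have hv : ∀ k : ℕ, ∃ v ∈ K, F k v ≤ m k + (k : ℝ≥0∞)⁻¹ := fun k => by
    simpa only [m, hKF k] using ENNReal.exists_mem_le_biInf_add hKne (F k)
      (ENNReal.inv_ne_zero.2 (ENNReal.natCast_ne_top k))
  choose v hvK hvF using hv
  obtain ⟨σ, hσ, hmσ⟩ := exists_strictMono_tendsto_liminf m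
  obtain ⟨u, -, ρ, hρ, hvσρ⟩ := hK.tendsto_subseq fun j => hvK (σ j)
  have hbound : Tendsto (fun j => m (σ (ρ j)) + ((σ (ρ j) : ℕ) : ℝ≥0∞)⁻¹) atTop
      (𝓝 (liminf m atTop)) := by
    simpa using (hmσ.comp hρ.tendsto_atTop).add
      (ENNReal.tendsto_inv_nat_nhds_zero.comp (hσ.comp hρ).tendsto_atTop)
  refine ⟨u, ?_⟩
  calc Flim u ≤ liminf (fun j => F (σ (ρ j)) (v (σ (ρ j)))) atTop :=
        hΓ.le_liminf_comp (hσ.comp hρ) hvσρ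
    _ ≤ liminf (fun j => m (σ (ρ j)) + ((σ (ρ j) : ℕ) : ℝ≥0∞)⁻¹) atTop :=
        liminf_le_liminf (Eventually.of_forall fun j => hvF _)
    _ = liminf m atTop := hbound.liminf_eq

end GammaConvergesTo

/-- Under equicoercivity, the Γ-limit attains its infimum and the infima of the `Fₖ`
converge to the infimum of the Γ-limit. -/
theorem stmt4 {X : Type*} [MetricSpace X] [Nonempty X]
    (F : ℕ → X → ENNReal) (Flim : X → ENNReal)
    (hΓ : GammaConvergesTo F Flim)
    (hequi : ∃ K : Set X, IsCompact K ∧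
      ∀ k : ℕ, (⨅ v : X, F k v) = ⨅ v ∈ K, F k v) :
    (∃ u : X, Flim u = ⨅ v : X, Flim v) ∧
      Tendsto (fun k => ⨅ v : X, F k v) atTop (𝓝 (⨅ v : X, Flim v)) := by
  obtain ⟨K, hK, hKF⟩ := hequi
  obtain ⟨u, hu⟩ := hΓ.exists_le_liminf_iInf hK hKF
  have hliminf_le : liminf (fun k => ⨅ v, F k v) atTop ≤ ⨅ v, Flim v :=
    le_trans liminf_le_limsup hΓ.limsup_iInf_le
  have hmin : Flim u = ⨅ v, Flim v := le_antisymm (hu.trans hliminf_le) (iInf_le _ u)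
  refine ⟨⟨u, hmin⟩, tendsto_of_liminf_eq_limsup ?_ ?_⟩
  · exact le_antisymm hliminf_le (hmin ▸ hu)
  · exact le_antisymm hΓ.limsup_iInf_le (hmin ▸ hu.trans liminf_le_limsup)
end

section
/- Let h > 0 and a ≥ 1. Define v : ℝ → ℝ³ by v(θ) = (a·cos θ, sin θ, −h) and let c(θ) = v(θ)/‖v(θ)‖ be the corresponding curve on the unit sphere (the curve of directions of the elliptic cone with apex (0,0,h) over the base ellipse {(a·cos θ, sin θ, 0)}). Then the arc length of c over one full period is strictly less than 2π: ∫₀^{2π} ‖c'(θ)‖ dθ < 2π. -/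
/-!
Write `v` for the generator of the cone and `Q = ‖v‖²`. The speed of the normalised curve
`v / ‖v‖` is `‖v × v'‖ / ‖v‖²`, and for the elliptic cone this is `√(S² - h² Q) / Q` with
`S² = (a² + h²)(1 + h²)`. Bounding the square root by a tangent line, `√x ≤ (x + t²) / (2t)`,
leaves a multiple of `∫ 1/Q = 2π / S` minus a constant; the optimal `t = √(S (S - h²))` gives
total length at most `2π √(1 - h² / S) < 2π`.
-/

open Real

section Normalize

open RealInnerProductSpace

variable {E : Type*} [NormedAddCommGroup E] [InnerProductSpace ℝ E]

theorem HasDerivAt.norm_inv_smul {v : ℝ → E} {v' : E} {t : ℝ} (hv : HasDerivAt v v' t)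
    (h0 : v t ≠ 0) :
    HasDerivAt (fun s => ‖v s‖⁻¹ • v s)
      (‖v t‖⁻¹ • v' - (⟪v t, v'⟫ / ‖v t‖ ^ 3) • v t) t := by
  have hr : 0 < ‖v t‖ := norm_pos_iff.2 h0
  have hnorm : HasDerivAt (fun s => ‖v s‖) (⟪v t, v'⟫ / ‖v t‖) t := by
    have := hv.norm_sq.sqrt (by positivity)
    simp only [sqrt_sq (norm_nonneg _)] at this
    convert this using 1
    field_simp
  refine ((hnorm.inv hr.ne').smul hv).congr_deriv ?_
  rw [sub_eq_add_neg, ← neg_smul]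
  congr 2
  field_simp

theorem norm_inv_smul_sub_inner_smul_sq (x w : E) (hx : x ≠ 0) :
    ‖‖x‖⁻¹ • w - (⟪x, w⟫ / ‖x‖ ^ 3) • x‖ ^ 2
      = (‖x‖ ^ 2 * ‖w‖ ^ 2 - ⟪x, w⟫ ^ 2) / ‖x‖ ^ 4 := by
  have hr : 0 < ‖x‖ := norm_pos_iff.2 hx
  rw [norm_sub_sq_real, norm_smul, norm_smul, inner_smul_left, inner_smul_right, real_inner_comm]
  simp only [Real.norm_eq_abs, abs_inv, abs_norm, abs_div, abs_pow, mul_pow, div_pow, sq_abs,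
    conj_trivial]
  field_simp
  ring

theorem norm_deriv_norm_inv_smul {v : ℝ → E} {v' : E} {t : ℝ} (hv : HasDerivAt v v' t)
    (h0 : v t ≠ 0) :
    ‖deriv (fun s => ‖v s‖⁻¹ • v s) t‖
      = √(‖v t‖ ^ 2 * ‖v'‖ ^ 2 - ⟪v t, v'⟫ ^ 2) / ‖v t‖ ^ 2 := by
  rw [(hv.norm_inv_smul h0).deriv, ← sqrt_sq (norm_nonneg _),
    norm_inv_smul_sub_inner_smul_sq _ _ h0, sqrt_div', show ‖v t‖ ^ 4 = (‖v t‖ ^ 2) ^ 2 by ring,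
    sqrt_sq (by positivity)]
  positivity

end Normalize

section EllipticIntegral

variable {p q : ℝ}

theorem mul_cos_sq_add_mul_sin_sq_pos (hp : 0 < p) (hq : 0 < q) (θ : ℝ) :
    0 < p * cos θ ^ 2 + q * sin θ ^ 2 := by
  rcases le_total p q with h | h <;>
    nlinarith [sin_sq_add_cos_sq θ, sq_nonneg (sin θ), sq_nonneg (cos θ)]

theorem continuous_inv_mul_cos_sq_add_mul_sin_sq (hp : 0 < p) (hq : 0 < q) :
    Continuous fun θ => (p * cos θ ^ 2 + q * sin θ ^ 2)⁻¹ :=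
  (by fun_prop : Continuous fun θ => p * cos θ ^ 2 + q * sin θ ^ 2).inv₀
    fun θ => (mul_cos_sq_add_mul_sin_sq_pos hp hq θ).ne'

/- Away from the poles of `tan` this primitive is `arctan (d * tan θ) / (p * d)`: the subtraction
formula for `arctan` turns `arctan (d * tan θ) - θ` into the continuous `arctan` term. -/
theorem hasDerivAt_inv_mul_cos_sq_add_mul_sin_sq (hp : 0 < p) {d : ℝ} (hd : 0 < d)
    (hq : p * d ^ 2 = q) (θ : ℝ) :
    HasDerivAt
      (fun θ => (θ + arctan ((d - 1) * sin θ * cos θ / (cos θ ^ 2 + d * sin θ ^ 2))) / (p * d))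
      (p * cos θ ^ 2 + q * sin θ ^ 2)⁻¹ θ := by
  have hden : 0 < cos θ ^ 2 + d * sin θ ^ 2 := by
    simpa using mul_cos_sq_add_mul_sin_sq_pos one_pos hd θ
  have hnum : HasDerivAt (fun θ => (d - 1) * sin θ * cos θ)
      ((d - 1) * (cos θ * cos θ - sin θ * sin θ)) θ :=
    (((hasDerivAt_sin θ).const_mul (d - 1)).mul (hasDerivAt_cos θ)).congr_deriv (by ring)
  have hdenom : HasDerivAt (fun θ => cos θ ^ 2 + d * sin θ ^ 2)
      (2 * (d - 1) * sin θ * cos θ) θ :=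
    (((hasDerivAt_cos θ).pow 2).add (((hasDerivAt_sin θ).pow 2).const_mul d)).congr_deriv
      (by ring)
  refine (((hasDerivAt_id θ).add (hnum.div hdenom hden.ne').arctan).div_const
    (p * d)).congr_deriv ?_
  have hQ : cos θ ^ 2 + d ^ 2 * sin θ ^ 2 ≠ 0 := by
    simpa using (mul_cos_sq_add_mul_sin_sq_pos one_pos (by positivity : 0 < d ^ 2) θ).ne'
  subst hq
  simp only [Pi.div_apply]
  field_simp
  linear_combination
    d * (cos θ ^ 2 + d ^ 2 * sin θ ^ 2) * (sin θ ^ 2 + cos θ ^ 2) * sin_sq_add_cos_sq θ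

theorem integral_inv_mul_cos_sq_add_mul_sin_sq (hp : 0 < p) (hq : 0 < q) :
    ∫ θ in (0)..(2 * π), (p * cos θ ^ 2 + q * sin θ ^ 2)⁻¹ = 2 * π / √(p * q) := by
  set d := √q / √p
  have hd : 0 < d := by positivity
  have hd2 : p * d ^ 2 = q := by
    rw [div_pow, sq_sqrt hq.le, sq_sqrt hp.le]
    field_simp
  have hpd : √(p * q) = p * d := by
    rw [sqrt_mul hp.le, mul_div_assoc', eq_div_iff (sqrt_ne_zero'.2 hp), mul_right_comm,
      mul_self_sqrt hp.le]
  rw [intervalIntegral.integral_eq_sub_of_hasDerivAt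
    (fun θ _ => hasDerivAt_inv_mul_cos_sq_add_mul_sin_sq hp hd hd2 θ)
    ((continuous_inv_mul_cos_sq_add_mul_sin_sq hp hq).intervalIntegrable _ _)]
  simp [hpd]

theorem sqrt_le_add_sq_div {x t : ℝ} (hx : 0 ≤ x) (ht : 0 < t) :
    √x ≤ (x + t ^ 2) / (2 * t) := by
  rw [le_div_iff₀ (by positivity)]
  nlinarith [sq_nonneg (√x - t), sq_sqrt hx]

/- `t` is the minimiser of the integral of the tangent-line bound. -/
theorem integral_sqrt_sub_mul_div_lt_two_pi {k : ℝ} (hk : 0 < k) (hkp : k ≤ p) (hkq : k < q) :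
    ∫ θ in (0)..(2 * π), √(p * q - k * (p * cos θ ^ 2 + q * sin θ ^ 2))
      / (p * cos θ ^ 2 + q * sin θ ^ 2) < 2 * π := by
  have hp : 0 < p := hk.trans_le hkp
  have hq : 0 < q := hk.trans hkq
  set S := √(p * q)
  have hS : 0 < S := by positivity
  have hS2 : S ^ 2 = p * q := sq_sqrt (by positivity)
  have hkS : k < S := (lt_sqrt hk.le).2 (by nlinarith)
  set t := √(S * (S - k))
  have ht : 0 < t := sqrt_pos.2 (by nlinarith)
  have ht2 : t ^ 2 = S * (S - k) := sq_sqrt (by nlinarith)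
  have hbound : ∀ θ, √(p * q - k * (p * cos θ ^ 2 + q * sin θ ^ 2))
      / (p * cos θ ^ 2 + q * sin θ ^ 2)
      ≤ -k / (2 * t) + (S ^ 2 + t ^ 2) / (2 * t) * (p * cos θ ^ 2 + q * sin θ ^ 2)⁻¹ := by
    intro θ
    have hQ := mul_cos_sq_add_mul_sin_sq_pos hp hq θ
    have hx : 0 ≤ p * q - k * (p * cos θ ^ 2 + q * sin θ ^ 2) := by
      nlinarith [sin_sq_add_cos_sq θ,
        mul_nonneg (mul_nonneg (sub_nonneg.2 hkq.le) hp.le) (sq_nonneg (cos θ)),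
        mul_nonneg (mul_nonneg (sub_nonneg.2 hkp) hq.le) (sq_nonneg (sin θ))]
    calc √(p * q - k * (p * cos θ ^ 2 + q * sin θ ^ 2)) / (p * cos θ ^ 2 + q * sin θ ^ 2)
        ≤ (p * q - k * (p * cos θ ^ 2 + q * sin θ ^ 2) + t ^ 2) / (2 * t)
          / (p * cos θ ^ 2 + q * sin θ ^ 2) := by
          gcongr
          exact sqrt_le_add_sq_div hx ht
      _ = _ := by
          rw [← hS2]
          field_simp
          ring
  have hQinv := continuous_inv_mul_cos_sq_add_mul_sin_sq hp hq
  calc ∫ θ in (0)..(2 * π), √(p * q - k * (p * cos θ ^ 2 + q * sin θ ^ 2))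
        / (p * cos θ ^ 2 + q * sin θ ^ 2)
      ≤ ∫ θ in (0)..(2 * π),
          (-k / (2 * t) + (S ^ 2 + t ^ 2) / (2 * t) * (p * cos θ ^ 2 + q * sin θ ^ 2)⁻¹) := by
        refine intervalIntegral.integral_mono_on (by positivity) ?_ ?_ fun θ _ => hbound θ
        · exact ((by fun_prop : Continuous fun θ =>
            √(p * q - k * (p * cos θ ^ 2 + q * sin θ ^ 2))).mul hQinv).intervalIntegrable _ _
        · exact (continuous_const.add (continuous_const.mul hQinv)).intervalIntegrable _ _
    _ = 2 * π * (-k / (2 * t)) + (S ^ 2 + t ^ 2) / (2 * t) * (2 * π / S) := by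
        rw [intervalIntegral.integral_add intervalIntegrable_const
          ((hQinv.intervalIntegrable _ _).const_mul _), intervalIntegral.integral_const,
          intervalIntegral.integral_const_mul, integral_inv_mul_cos_sq_add_mul_sin_sq hp hq]
        simp [S]
    _ = 2 * π * ((S - k) / t) := by
        field_simp
        rw [ht2]
        ring
    _ < 2 * π * 1 := by
        gcongr
        rw [div_lt_one ht, lt_sqrt (by linarith)]
        nlinarith
    _ = 2 * π := mul_one _

end EllipticIntegral

section EllipticCone

open RealInnerProductSpace

noncomputable def ellipticConeGenerator (a h θ : ℝ) : EuclideanSpace ℝ (Fin 3) :=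
  (WithLp.equiv 2 (Fin 3 → ℝ)).symm ![a * cos θ, sin θ, -h]

variable (a h : ℝ)

theorem hasDerivAt_ellipticConeGenerator (θ : ℝ) :
    HasDerivAt (ellipticConeGenerator a h)
      ((WithLp.equiv 2 (Fin 3 → ℝ)).symm ![-(a * sin θ), cos θ, 0]) θ := by
  have hcoord : HasDerivAt (fun θ => ![a * cos θ, sin θ, -h]) ![-(a * sin θ), cos θ, 0] θ := by
    rw [hasDerivAt_pi]
    intro i
    fin_cases i
    · simpa [mul_comm] using (hasDerivAt_cos θ).const_mul a
    · exact hasDerivAt_sin θ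
    · exact hasDerivAt_const θ (-h)
  exact (PiLp.continuousLinearEquiv 2 ℝ (fun _ : Fin 3 => ℝ)).symm.hasFDerivAt.comp_hasDerivAt
    θ hcoord

theorem ellipticConeGenerator_ne_zero {h : ℝ} (hh : h ≠ 0) (θ : ℝ) :
    ellipticConeGenerator a h θ ≠ 0 := by
  intro h0
  have := congrArg (· 2) h0
  simp [ellipticConeGenerator] at this
  exact hh this

theorem norm_ellipticConeGenerator_sq (θ : ℝ) :
    ‖ellipticConeGenerator a h θ‖ ^ 2
      = (a ^ 2 + h ^ 2) * cos θ ^ 2 + (1 + h ^ 2) * sin θ ^ 2 := by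
  rw [EuclideanSpace.norm_sq_eq]
  simp [ellipticConeGenerator, Fin.sum_univ_three]
  linear_combination -h ^ 2 * sin_sq_add_cos_sq θ

/- Both sides equal `‖v × v'‖² = a² + h² (cos² θ + a² sin² θ)`. -/
theorem norm_sq_mul_norm_sq_sub_inner_sq_ellipticConeGenerator (θ : ℝ) :
    ‖ellipticConeGenerator a h θ‖ ^ 2
        * ‖(WithLp.equiv 2 (Fin 3 → ℝ)).symm ![-(a * sin θ), cos θ, 0]‖ ^ 2
      - ⟪ellipticConeGenerator a h θ, (WithLp.equiv 2 (Fin 3 → ℝ)).symm ![-(a * sin θ), cos θ, 0]⟫ ^ 2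
      = (a ^ 2 + h ^ 2) * (1 + h ^ 2)
        - h ^ 2 * ((a ^ 2 + h ^ 2) * cos θ ^ 2 + (1 + h ^ 2) * sin θ ^ 2) := by
  rw [norm_ellipticConeGenerator_sq, EuclideanSpace.norm_sq_eq]
  simp [ellipticConeGenerator, Fin.sum_univ_three, EuclideanSpace.inner_eq_star_dotProduct]
  linear_combination (a ^ 2 * (sin θ ^ 2 + cos θ ^ 2 + 1) + h ^ 2 * (a ^ 2 * sin θ ^ 2 + cos θ ^ 2)
    + h ^ 2 * (a ^ 2 + 1) + h ^ 4) * sin_sq_add_cos_sq θ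

theorem norm_deriv_normalized_ellipticConeGenerator {h : ℝ} (hh : h ≠ 0) (θ : ℝ) :
    ‖deriv (fun θ => ‖ellipticConeGenerator a h θ‖⁻¹ • ellipticConeGenerator a h θ) θ‖
      = √((a ^ 2 + h ^ 2) * (1 + h ^ 2)
          - h ^ 2 * ((a ^ 2 + h ^ 2) * cos θ ^ 2 + (1 + h ^ 2) * sin θ ^ 2))
        / ((a ^ 2 + h ^ 2) * cos θ ^ 2 + (1 + h ^ 2) * sin θ ^ 2) := by
  rw [norm_deriv_norm_inv_smul (hasDerivAt_ellipticConeGenerator a h θ)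
      (ellipticConeGenerator_ne_zero a hh θ),
    norm_sq_mul_norm_sq_sub_inner_sq_ellipticConeGenerator, norm_ellipticConeGenerator_sq]

end EllipticCone

theorem stmt8_general (h a : ℝ) (hh : 0 < h)
    (v : ℝ → EuclideanSpace ℝ (Fin 3))
    (hv : ∀ θ : ℝ, v θ = (WithLp.equiv 2 (Fin 3 → ℝ)).symm
      ![a * Real.cos θ, Real.sin θ, -h])
    (c : ℝ → EuclideanSpace ℝ (Fin 3))
    (hc : ∀ θ : ℝ, c θ = ‖v θ‖⁻¹ • v θ) :
    (∫ θ in (0:ℝ)..(2 * Real.pi), ‖deriv c θ‖) < 2 * Real.pi := by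
  obtain rfl : v = ellipticConeGenerator a h := funext hv
  obtain rfl : c = fun θ => ‖ellipticConeGenerator a h θ‖⁻¹ • ellipticConeGenerator a h θ :=
    funext hc
  rw [intervalIntegral.integral_congr fun θ _ =>
    norm_deriv_normalized_ellipticConeGenerator a hh.ne' θ]
  exact integral_sqrt_sub_mul_div_lt_two_pi (by positivity)
    (le_add_of_nonneg_left (sq_nonneg a)) (lt_one_add _)

/-- The spherical cross-section curve of an elliptic cone of height `h > 0` over the ellipse
with semi-axes `a ≥ 1` and `1` has total arc length strictly less than `2π`, i.e. the cone
angle at the tip is less than `2π`. -/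
theorem stmt8 (h a : ℝ) (hh : 0 < h) (ha : 1 ≤ a)
    (v : ℝ → EuclideanSpace ℝ (Fin 3))
    (hv : ∀ θ : ℝ, v θ = (WithLp.equiv 2 (Fin 3 → ℝ)).symm
      ![a * Real.cos θ, Real.sin θ, -h])
    (c : ℝ → EuclideanSpace ℝ (Fin 3))
    (hc : ∀ θ : ℝ, c θ = ‖v θ‖⁻¹ • v θ) :
    (∫ θ in (0:ℝ)..(2 * Real.pi), ‖deriv c θ‖) < 2 * Real.pi :=
  stmt8_general h a hh v hv c hc
end

section
/- For every h > 0, setting S := √(1+h²) and α := 2π/S, there exists β ∈ (0, π/2) such that ((S·cos β/sin β)²/2)·(2β − sin(2β)) + (S²/2)·(π − 2β − sin(2β)) = α·S²/4. That is, with r₁ = S·cot β, the two circular segments of areas A₁(β) = (r₁²/2)(2β − sin 2β) and A₂(β) = (S²/2)(π − 2β − sin 2β) together make up exactly half the area α·S²/2 of the sector of radius S and angle α. -/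
/-!
The total area `F(β) = A₁(β) + A₂(β)` is continuous on `(0, π)` and vanishes at `β = π/2`.
Since `sin (2β) ≤ 2β`, `A₁(β) ≥ 0` and `A₂(β) ≥ S²/2 · (π - 4β)`, so `F` comes arbitrarily close
to `π S²/2` near `β = 0`. Every value in `(0, π S²/2)`, in particular `α S²/4 = π S/2` when
`S > 1`, is therefore attained on `(0, π/2)` by the intermediate value theorem.
-/

open Real Set

/-- `A₁(β) + A₂(β)` with `r₁ = S cot β`. -/
noncomputable def twoSegmentArea (S β : ℝ) : ℝ :=
  (S * cos β / sin β) ^ 2 / 2 * (2 * β - sin (2 * β)) + S ^ 2 / 2 * (π - 2 * β - sin (2 * β))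

section

variable (S : ℝ)

theorem continuousOn_twoSegmentArea : ContinuousOn (twoSegmentArea S) (Ioo 0 π) := by
  have hsin : ∀ β ∈ Ioo 0 π, sin β ≠ 0 := fun β hβ => (sin_pos_of_pos_of_lt_pi hβ.1 hβ.2).ne'
  unfold twoSegmentArea
  fun_prop (disch := assumption)

theorem twoSegmentArea_pi_div_two : twoSegmentArea S (π / 2) = 0 := by
  simp [twoSegmentArea, show 2 * (π / 2) = π by ring]

theorem le_twoSegmentArea {β : ℝ} (hβ : 0 ≤ β) : S ^ 2 / 2 * (π - 4 * β) ≤ twoSegmentArea S β := by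
  have hsin : sin (2 * β) ≤ 2 * β := sin_le (by linarith)
  have hfirst : 0 ≤ (S * cos β / sin β) ^ 2 / 2 * (2 * β - sin (2 * β)) :=
    mul_nonneg (by positivity) (by linarith)
  have hsecond : S ^ 2 / 2 * (π - 4 * β) ≤ S ^ 2 / 2 * (π - 2 * β - sin (2 * β)) :=
    mul_le_mul_of_nonneg_left (by linarith) (by positivity)
  unfold twoSegmentArea
  linarith

end

theorem exists_twoSegmentArea_eq {S c : ℝ} (hc : 0 < c) (hcS : c < π * S ^ 2 / 2) :
    ∃ β ∈ Ioo 0 (π / 2), twoSegmentArea S β = c := by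
  have hS2 : 0 < S ^ 2 := by nlinarith [pi_pos]
  -- at `β₀` the lower bound `S²/2 · (π - 4β₀)` equals `π S²/4 + c/2 > c`
  set β₀ := (π - 2 * c / S ^ 2) / 8 with hβ₀
  have hβ₀_pos : 0 < β₀ := by
    have : 2 * c / S ^ 2 < π := by rw [div_lt_iff₀ hS2]; linarith
    linarith
  have hβ₀_lt : β₀ < π / 2 := by
    have : 0 < 2 * c / S ^ 2 := by positivity
    linarith [pi_pos]
  have hcβ₀ : c < twoSegmentArea S β₀ := by
    have hbound := le_twoSegmentArea S hβ₀_pos.le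
    have : S ^ 2 / 2 * (π - 4 * β₀) = π * S ^ 2 / 4 + c / 2 := by
      have hS0 : S ≠ 0 := by rintro rfl; norm_num at hS2
      rw [hβ₀]; field_simp; ring
    linarith
  have hcont : ContinuousOn (twoSegmentArea S) (Icc β₀ (π / 2)) :=
    (continuousOn_twoSegmentArea S).mono fun β hβ =>
      ⟨hβ₀_pos.trans_le hβ.1, hβ.2.trans_lt (by linarith [pi_pos])⟩
  obtain ⟨β, hβ, hβc⟩ := intermediate_value_Ioo' hβ₀_lt.le hcont
    ⟨(twoSegmentArea_pi_div_two S).symm ▸ hc, hcβ₀⟩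
  exact ⟨β, ⟨hβ₀_pos.trans hβ.1, hβ.2⟩, hβc⟩

/-- Existence of the winding (type T2) area-halving interface on the flattened cone:
there is `β ∈ (0, π/2)` such that the two circular segments of areas
`A₁(β) = (r₁²/2)(2β - sin 2β)` (with `r₁ = S·cot β`) and
`A₂(β) = (S²/2)(π - 2β - sin 2β)` together make up half the sector area `α·S²/2`. -/
theorem stmt14 (h : ℝ) (hh : 0 < h) (S α : ℝ)
    (hS : S = Real.sqrt (1 + h ^ 2)) (hα : α = 2 * Real.pi / S) :
    ∃ β ∈ Set.Ioo 0 (Real.pi / 2),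
      (S * Real.cos β / Real.sin β) ^ 2 / 2 * (2 * β - Real.sin (2 * β)) +
        S ^ 2 / 2 * (Real.pi - 2 * β - Real.sin (2 * β)) = α * S ^ 2 / 4 := by
  have hS1 : 1 < S := by
    rw [hS, lt_sqrt zero_le_one]
    nlinarith
  have htarget : α * S ^ 2 / 4 = π * S / 2 := by
    rw [hα]; field_simp; ring
  rw [htarget]
  have hSS : π * S < π * S ^ 2 := mul_lt_mul_of_pos_left (by nlinarith) pi_pos
  exact exists_twoSegmentArea_eq (by positivity) (by linarith)
end

section
/- Let c > 0 and define u : (0,∞) × ℝ → ℝ by u(r,θ) = r^{1/c}·sin θ (with r^{1/c} the real power). Then: (i) for every r > 0 and θ ∈ ℝ, u satisfies the conic Laplace equation ∂²u/∂r² + (1/r)·∂u/∂r + (1/(c²·r²))·∂²u/∂θ² = 0; and (ii) if c > 1, the second radial derivative ∂²u/∂r²(r,θ) = (1/c)·(1/c − 1)·r^{1/c − 2}·sin θ fails to be square integrable with respect to the cone volume measure r dr dθ near r = 0; concretely, the function r ↦ r^{2/c − 3} is not integrable on the interval (0,1). -/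
open Real MeasureTheory

/-! The radial profile `r ^ (1 / c)` is an eigenfunction of the Euler operator `r² ∂²_r + r ∂_r`
with eigenvalue `1 / c²`, which cancels the angular term `c⁻² ∂²_θ sin θ = -c⁻² sin θ`.
For `c > 1` the second radial derivative behaves like `r ^ (1 / c - 2)`, whose square against
`r dr` is `r ^ (2 / c - 3)` with exponent below `-1`, hence not integrable at the tip. -/

lemma deriv_rpow_mul_const (p a : ℝ) {r : ℝ} (hr : 0 < r) :
    deriv (fun s : ℝ => s ^ p * a) r = p * r ^ (p - 1) * a :=
  ((hasDerivAt_rpow_const (Or.inl hr.ne')).mul_const a).deriv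

lemma deriv_deriv_rpow_mul_const (p a : ℝ) {r : ℝ} (hr : 0 < r) :
    deriv (fun s : ℝ => deriv (fun s' : ℝ => s' ^ p * a) s) r
      = p * (p - 1) * r ^ (p - 2) * a := by
  have hfirst : (fun s : ℝ => deriv (fun s' : ℝ => s' ^ p * a) s)
      =ᶠ[nhds r] fun s => p * s ^ (p - 1) * a := by
    filter_upwards [isOpen_Ioi.mem_nhds hr] with s hs
    exact deriv_rpow_mul_const p a hs
  rw [hfirst.deriv_eq,
    (((hasDerivAt_rpow_const (p := p - 1) (Or.inl hr.ne')).const_mul p).mul_const a).deriv,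
    sub_sub, one_add_one_eq_two]
  ring

lemma deriv_deriv_const_mul_sin (b θ : ℝ) :
    deriv (fun t : ℝ => deriv (fun t' : ℝ => b * sin t') t) θ = -(b * sin θ) := by
  have hfirst : (fun t : ℝ => deriv (fun t' : ℝ => b * sin t') t) = fun t => b * cos t :=
    funext fun t => ((hasDerivAt_sin t).const_mul b).deriv
  rw [hfirst, ((hasDerivAt_cos θ).const_mul b).deriv, mul_neg]

/-- On the cone with metric `dr² + c²r²dθ²`, the function `u(r,θ) = r^{1/c} sin θ`
is harmonic for the conic Laplacian `∂²_r + r⁻¹∂_r + c⁻²r⁻²∂²_θ`; moreover, for cone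
angle `2πc > 2π` (i.e. `c > 1`) its second radial derivative equals
`(1/c)(1/c - 1) r^{1/c-2} sin θ`, and `r ↦ r^{2/c-3}` fails to be integrable on `(0,1)`,
so `u ∉ H²` near the tip. -/
theorem stmt17 (c : ℝ) (hc : 0 < c)
    (u : ℝ → ℝ → ℝ) (hu : ∀ r θ : ℝ, u r θ = r ^ (1 / c) * Real.sin θ) :
    (∀ r : ℝ, 0 < r → ∀ θ : ℝ,
      deriv (fun s : ℝ => deriv (fun s' : ℝ => u s' θ) s) r
        + 1 / r * deriv (fun s : ℝ => u s θ) r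
        + 1 / (c ^ 2 * r ^ 2) * deriv (fun t : ℝ => deriv (fun t' : ℝ => u r t') t) θ
        = 0) ∧
    (1 < c →
      (∀ r : ℝ, 0 < r → ∀ θ : ℝ,
        deriv (fun s : ℝ => deriv (fun s' : ℝ => u s' θ) s) r
          = 1 / c * (1 / c - 1) * r ^ (1 / c - 2) * Real.sin θ) ∧
      ¬ IntegrableOn (fun r : ℝ => r ^ (2 / c - 3)) (Set.Ioo (0 : ℝ) 1)) := by
  obtain rfl : u = fun r θ => r ^ (1 / c) * sin θ := funext₂ hu
  refine ⟨fun r hr θ => ?_, fun hc1 => ⟨fun r hr θ => deriv_deriv_rpow_mul_const _ _ hr, ?_⟩⟩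
  · rw [deriv_deriv_rpow_mul_const _ _ hr, deriv_rpow_mul_const _ _ hr,
      deriv_deriv_const_mul_sin, rpow_sub hr, rpow_sub_one hr.ne', rpow_two]
    field_simp
    ring
  · rw [intervalIntegral.integrableOn_Ioo_rpow_iff zero_lt_one, not_lt]
    have : 2 / c < 2 := (div_lt_iff₀ hc).2 (by linarith)
    linarith
end
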